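/- Let x̂_Ω : ℂ^m → ℂⁿ for each sampling set Ω, with Ω drawn from a finite distribution, and suppose for every Ω with positive probability, x̂_Ω satisfies the noiseless-limit hypotheses at y_Ω := F_Ω x (differentiability with L² Gateaux control and polynomial growth). Then lim_{σ→0} Var_{Ω,z}[x̂_Ω(F_Ω x + σ S_Ω z)] = Var_Ω[x̂_Ω(F_Ω x)], where z is a standard complex Gaussian on ℂⁿ independent of Ω. -/

import Mathlib

/-!
Both sides are covariances. As `σ → 0` the reconstruction `x̂_Ω (y_Ω + σ S_Ω z)` tends to
`x̂_Ω y_Ω` by continuity, and for `|σ| ≤ 1` continuity together with polynomial growth bounds it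
by `K_Ω (1 + ‖z‖) ^ k_Ω`, which is square integrable since a Gaussian vector has moments of all
orders. Dominated convergence then passes to the limit first in the means and then in the
covariance integrand; the limit depends on `Ω` only, so the integral over the noise drops out.
-/

open MeasureTheory ProbabilityTheory Matrix Filter

/-- The standard complex Gaussian measure on `ℂ^m`. -/
noncomputable def stdComplexGaussian (m : ℕ) : Measure (Fin m → ℂ) :=
  Measure.pi fun _ : Fin m =>
    ((gaussianReal 0 1).prod (gaussianReal 0 1)).map fun p : ℝ × ℝ => (p.1 + p.2 * Complex.I)

/-- The Euclidean (ℓ²) norm of a finitely supported complex vector. -/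
noncomputable def l2norm {ι : Type*} [Fintype ι] (v : ι → ℂ) : ℝ :=
  Real.sqrt (∑ i, Complex.normSq (v i))

/-- Radial projection onto the unit sphere of `ℂ^m`. -/
noncomputable def dirSphere (m : ℕ) (z : Fin m → ℂ) : Fin m → ℂ :=
  fun i => z i / (l2norm z : ℂ)

/-- The uniform probability measure on the unit sphere of `ℂ^m`, realized as the
law of the direction of a standard complex Gaussian vector. -/
noncomputable def uniformSphere (m : ℕ) : Measure (Fin m → ℂ) :=
  (stdComplexGaussian m).map (dirSphere m)

open scoped Topology ENNReal

lemma isGaussian_complexGaussian :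
    IsGaussian (((gaussianReal 0 1).prod (gaussianReal 0 1)).map
      fun p : ℝ × ℝ => (p.1 + p.2 * Complex.I)) := by
  simp_rw [← Complex.equivRealProdCLM_symm_apply]
  infer_instance

instance isProbabilityMeasure_stdComplexGaussian (n : ℕ) :
    IsProbabilityMeasure (stdComplexGaussian n) := by
  have := isGaussian_complexGaussian
  unfold stdComplexGaussian
  infer_instance

lemma memLp_id_stdComplexGaussian (n : ℕ) {p : ℝ≥0∞} (hp : p ≠ ∞) :
    MemLp id p (stdComplexGaussian n) := by
  have := isGaussian_complexGaussian
  refine memLp_pi_iff.2 fun i => ?_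
  exact (IsGaussian.memLp_id _ p hp).comp_measurePreserving (measurePreserving_eval _ i)

lemma integrable_one_add_norm_pow_stdComplexGaussian (n k : ℕ) :
    Integrable (fun z => (1 + ‖z‖) ^ k) (stdComplexGaussian n) := by
  have h := ((memLp_const (1 : ℝ)).add
    (memLp_id_stdComplexGaussian n (p := k) (ENNReal.natCast_ne_top k)).norm).integrable_norm_pow'
  refine h.congr (ae_of_all _ fun z => ?_)
  simp [abs_of_nonneg (add_nonneg zero_le_one (norm_nonneg z))]

section Covariance

variable {Ω ι 𝕜 : Type*} [MeasurableSpace Ω] {μ : Measure Ω} [RCLike 𝕜]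

lemma ae_norm_sub_integral_le {f : Ω → 𝕜} {H : Ω → ℝ} (hH : Integrable H μ)
    (hf : ∀ᵐ ω ∂μ, ‖f ω‖ ≤ H ω) :
    ∀ᵐ ω ∂μ, ‖f ω - ∫ ω', f ω' ∂μ‖ ≤ H ω + ∫ ω', H ω' ∂μ := by
  have hmean := norm_integral_le_of_norm_le hH hf
  filter_upwards [hf] with ω hω
  exact (norm_sub_le _ _).trans (add_le_add hω hmean)

variable [IsProbabilityMeasure μ] {l : Filter ι} [l.IsCountablyGenerated]

theorem tendsto_integral_mul_star_sub_integral {f g : ι → Ω → 𝕜} {f₀ g₀ : Ω → 𝕜} {H : Ω → ℝ}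
    (hH : MemLp H 2 μ)
    (hf_meas : ∀ᶠ σ in l, AEStronglyMeasurable (f σ) μ)
    (hg_meas : ∀ᶠ σ in l, AEStronglyMeasurable (g σ) μ)
    (hf_le : ∀ᶠ σ in l, ∀ᵐ ω ∂μ, ‖f σ ω‖ ≤ H ω) (hg_le : ∀ᶠ σ in l, ∀ᵐ ω ∂μ, ‖g σ ω‖ ≤ H ω)
    (hf : ∀ᵐ ω ∂μ, Tendsto (fun σ => f σ ω) l (𝓝 (f₀ ω)))
    (hg : ∀ᵐ ω ∂μ, Tendsto (fun σ => g σ ω) l (𝓝 (g₀ ω))) :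
    Tendsto (fun σ => ∫ ω, (f σ ω - ∫ ω', f σ ω' ∂μ) * star (g σ ω - ∫ ω', g σ ω' ∂μ) ∂μ) l
      (𝓝 (∫ ω, (f₀ ω - ∫ ω', f₀ ω' ∂μ) * star (g₀ ω - ∫ ω', g₀ ω' ∂μ) ∂μ)) := by
  have hH₁ : Integrable H μ := hH.integrable one_le_two
  have hf_mean := tendsto_integral_filter_of_dominated_convergence H hf_meas hf_le hH₁ hf
  have hg_mean := tendsto_integral_filter_of_dominated_convergence H hg_meas hg_le hH₁ hg
  refine tendsto_integral_filter_of_dominated_convergence (fun ω => (H ω + ∫ ω', H ω' ∂μ) ^ 2)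
    ?_ ?_ ?_ ?_
  · filter_upwards [hf_meas, hg_meas] with σ hfσ hgσ
    exact (hfσ.sub aestronglyMeasurable_const).mul
      (hgσ.sub aestronglyMeasurable_const).star
  · filter_upwards [hf_le, hg_le] with σ hfσ hgσ
    filter_upwards [ae_norm_sub_integral_le hH₁ hfσ, ae_norm_sub_integral_le hH₁ hgσ]
      with ω hfω hgω
    rw [norm_mul, norm_star, sq]
    exact mul_le_mul hfω hgω (norm_nonneg _) ((norm_nonneg _).trans hfω)
  · exact (hH.add (memLp_const _)).integrable_sq
  · filter_upwards [hf, hg] with ω hfω hgω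
    exact (hfω.sub hf_mean).mul ((hgω.sub hg_mean).star)

end Covariance

lemma norm_le_l2norm {ι : Type*} [Fintype ι] (v : ι → ℂ) : ‖v‖ ≤ l2norm v :=
  (pi_norm_le_iff_of_nonneg (Real.sqrt_nonneg _)).2 fun i => Real.sqrt_le_sqrt <|
    Finset.single_le_sum (fun j _ => Complex.normSq_nonneg (v j)) (Finset.mem_univ i)

lemma l2norm_le_sqrt_card_mul_norm {ι : Type*} [Fintype ι] (v : ι → ℂ) :
    l2norm v ≤ √(Fintype.card ι) * ‖v‖ := by
  have hsum : ∑ i, Complex.normSq (v i) ≤ Fintype.card ι * ‖v‖ ^ 2 := by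
    simpa [Complex.normSq_eq_norm_sq] using Finset.sum_le_card_nsmul Finset.univ
      (fun i => ‖v i‖ ^ 2) (‖v‖ ^ 2) fun i _ => pow_le_pow_left₀ (norm_nonneg _)
        (norm_le_pi_norm v i) 2
  calc l2norm v ≤ √(Fintype.card ι * ‖v‖ ^ 2) := Real.sqrt_le_sqrt hsum
    _ = √(Fintype.card ι) * ‖v‖ := by
      rw [Real.sqrt_mul (Nat.cast_nonneg _), Real.sqrt_sq (norm_nonneg _)]

lemma norm_le_of_l2norm_le_mul_rpow {ι κ : Type*} [Fintype ι] [Fintype κ]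
    {f : (ι → ℂ) → κ → ℂ} {C r α : ℝ} (hC : 0 ≤ C) (hα : 0 ≤ α)
    (h : ∀ w, r < l2norm w → l2norm (f w) ≤ C * l2norm w ^ α) {w : ι → ℂ} (hw : r < ‖w‖) :
    ‖f w‖ ≤ C * √(Fintype.card ι) ^ α * ‖w‖ ^ α := by
  calc ‖f w‖ ≤ l2norm (f w) := norm_le_l2norm _
    _ ≤ C * l2norm w ^ α := h w (hw.trans_le (norm_le_l2norm w))
    _ ≤ C * (√(Fintype.card ι) * ‖w‖) ^ α := by
      gcongr
      exacts [Real.sqrt_nonneg _, l2norm_le_sqrt_card_mul_norm w]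
    _ = C * √(Fintype.card ι) ^ α * ‖w‖ ^ α := by
      rw [Real.mul_rpow (Real.sqrt_nonneg _) (norm_nonneg _), mul_assoc]

lemma exists_norm_le_mul_one_add_norm_pow {E F : Type*} [NormedAddCommGroup E] [ProperSpace E]
    [NormedAddCommGroup F] {f : E → F} (hf : Continuous f) {C r α : ℝ} (hC : 0 ≤ C)
    (hα : 0 ≤ α) (h : ∀ w, r < ‖w‖ → ‖f w‖ ≤ C * ‖w‖ ^ α) :
    ∃ K : ℝ, ∃ k : ℕ, ∀ w, ‖f w‖ ≤ K * (1 + ‖w‖) ^ k := by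
  obtain ⟨M, hM⟩ :=
    (isCompact_closedBall (0 : E) r).exists_bound_of_continuousOn hf.continuousOn
  refine ⟨max M C, ⌈α⌉₊, fun w => ?_⟩
  have hw1 : 1 ≤ 1 + ‖w‖ := le_add_of_nonneg_right (norm_nonneg w)
  rcases le_or_gt ‖w‖ r with hw | hw
  · have hfM : ‖f w‖ ≤ M := hM w (by simpa using hw)
    calc ‖f w‖ ≤ max M C := hfM.trans (le_max_left _ _)
      _ ≤ max M C * (1 + ‖w‖) ^ ⌈α⌉₊ :=
        le_mul_of_one_le_right ((norm_nonneg _).trans (hfM.trans (le_max_left _ _)))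
          (one_le_pow₀ hw1)
  · calc ‖f w‖ ≤ C * ‖w‖ ^ α := h w hw
      _ ≤ C * (1 + ‖w‖) ^ (⌈α⌉₊ : ℝ) := by
        gcongr
        exact (Real.rpow_le_rpow (norm_nonneg w) (by linarith) hα).trans
          (Real.rpow_le_rpow_of_exponent_le hw1 (Nat.le_ceil α))
      _ ≤ max M C * (1 + ‖w‖) ^ ⌈α⌉₊ := by
        rw [Real.rpow_natCast]
        exact mul_le_mul_of_nonneg_right (le_max_right _ _) (by positivity)

lemma norm_comp_add_smul_le {E F G : Type*} [SeminormedAddCommGroup E] [NormedSpace ℝ E]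
    [SeminormedAddCommGroup F] [SeminormedAddCommGroup G] {f : E → F} {K : ℝ} {k : ℕ}
    (hf : ∀ w, ‖f w‖ ≤ K * (1 + ‖w‖) ^ k) {L : G → E} {c : ℝ} (hc : 0 ≤ c)
    (hL : ∀ z, ‖L z‖ ≤ c * ‖z‖) (y : E) {σ : ℝ} (hσ : |σ| ≤ 1) (z : G) :
    ‖f (y + σ • L z)‖ ≤ K * (1 + ‖y‖ + c) ^ k * (1 + ‖z‖) ^ k := by
  have hK : 0 ≤ K := by simpa using (norm_nonneg _).trans (hf 0)
  have hσL : ‖σ • L z‖ ≤ c * ‖z‖ := by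
    rw [norm_smul, Real.norm_eq_abs]
    exact (mul_le_of_le_one_left (norm_nonneg _) hσ).trans (hL z)
  have hw : 1 + ‖y + σ • L z‖ ≤ (1 + ‖y‖ + c) * (1 + ‖z‖) := by
    nlinarith [norm_add_le y (σ • L z), norm_nonneg y, norm_nonneg z]
  calc ‖f (y + σ • L z)‖ ≤ K * (1 + ‖y + σ • L z‖) ^ k := hf _
    _ ≤ K * ((1 + ‖y‖ + c) * (1 + ‖z‖)) ^ k := by gcongr
    _ = K * (1 + ‖y‖ + c) ^ k * (1 + ‖z‖) ^ k := by rw [mul_pow, mul_assoc]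

lemma aemeasurable_from_prod_countable_right {α β γ : Type*} [MeasurableSpace α] [Countable α]
    [MeasurableSingletonClass α] [MeasurableSpace β] [MeasurableSpace γ] [Nonempty γ]
    {P : Measure α} {G : Measure β} {f : α × β → γ}
    (hf : ∀ᵐ a ∂P, Measurable fun b => f (a, b)) : AEMeasurable f (P.prod G) := by
  classical
  rw [ae_iff_of_countable] at hf
  refine ⟨fun ab => if P {ab.1} = 0 then Classical.arbitrary γ else f ab,
    measurable_from_prod_countable_right fun a => ?_, ?_⟩
  · by_cases ha : P {a} = 0
    · simp [ha]
    · simpa [ha] using hf a ha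
  · have hP : ∀ᵐ ab ∂P.prod G, P {ab.1} ≠ 0 :=
      Measure.quasiMeasurePreserving_fst.ae (ae_iff_of_countable.2 fun _ ha => ha)
    filter_upwards [hP] with ab hab
    simp [hab]

lemma tendsto_comp_add_smul_nhdsGT {E F : Type*} [TopologicalSpace E] [AddCommGroup E]
    [Module ℝ E] [ContinuousAdd E] [ContinuousSMul ℝ E] [TopologicalSpace F] {f : E → F}
    (hf : Continuous f) (y v : E) :
    Tendsto (fun σ : ℝ => f (y + σ • v)) (𝓝[>] 0) (𝓝 (f y)) :=
  ((hf.comp (continuous_const.add (continuous_id.smul continuous_const))).tendsto' 0 _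
    (by simp)).mono_left nhdsWithin_le_nhds

lemma exists_norm_comp_add_smul_mulVec_le {ι ι' κ : Type*} [Fintype ι] [Fintype ι'] [Fintype κ]
    {f : (ι → ℂ) → κ → ℂ} (hf : Continuous f) {C r α : ℝ} (hC : 0 ≤ C) (hα : 0 ≤ α)
    (hgrowth : ∀ w, r < l2norm w → l2norm (f w) ≤ C * l2norm w ^ α)
    (y : ι → ℂ) (S : Matrix ι ι' ℂ) :
    ∃ K : ℝ, ∃ k : ℕ, ∀ σ : ℝ, |σ| ≤ 1 → ∀ z, ‖f (y + σ • S *ᵥ z)‖ ≤ K * (1 + ‖z‖) ^ k := by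
  obtain ⟨K, k, hK⟩ := exists_norm_le_mul_one_add_norm_pow hf (by positivity) hα
    fun w hw => norm_le_of_l2norm_le_mul_rpow hC hα hgrowth hw
  obtain ⟨c, hc, hS⟩ := (Matrix.mulVecLin S).toContinuousLinearMap.bound
  exact ⟨_, k, fun σ hσ z => norm_comp_add_smul_le hK hc.le (by simpa using hS) y hσ z⟩

lemma memLp_two_mul_one_add_norm_pow_prod_stdComplexGaussian {α : Type*} [MeasurableSpace α]
    [Finite α] [MeasurableSingletonClass α] (P : Measure α) [IsFiniteMeasure P] (n : ℕ)
    (K : α → ℝ) (k : α → ℕ) :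
    MemLp (fun qz : α × (Fin n → ℂ) => K qz.1 * (1 + ‖qz.2‖) ^ k qz.1) 2
      (P.prod (stdComplexGaussian n)) := by
  have : Countable α := Finite.to_countable
  have hm : Measurable fun qz : α × (Fin n → ℂ) => K qz.1 * (1 + ‖qz.2‖) ^ k qz.1 :=
    measurable_from_prod_countable_right fun q => by fun_prop
  refine (memLp_two_iff_integrable_sq hm.aestronglyMeasurable).2 <|
    (integrable_prod_iff (hm.pow_const 2).aestronglyMeasurable).2
      ⟨ae_of_all _ fun q => ?_, Integrable.of_finite⟩
  simpa [mul_pow, ← pow_mul] using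
    (integrable_one_add_norm_pow_stdComplexGaussian n (k q * 2)).const_mul (K q ^ 2)

theorem stmt_17_general (n N J : ℕ)
    (m : Fin J → ℕ)
    (S : ∀ q : Fin J, Matrix (Fin (m q)) (Fin n) ℂ)
    (y : ∀ q : Fin J, Fin (m q) → ℂ)
    (xhat : ∀ q : Fin J, (Fin (m q) → ℂ) → Fin N → ℂ)
    (p : PMF (Fin J))
    (hcont : ∀ q, p q ≠ 0 → Continuous (xhat q))
    (hgrowth : ∀ q, p q ≠ 0 → ∃ C r α : ℝ, 0 < C ∧ 0 < r ∧ 0 < α ∧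
      ∀ w, r < l2norm w → l2norm (xhat q w) ≤ C * l2norm w ^ α)
    (ν : Measure ((Fin J) × (Fin n → ℂ)))
    (hν : ν = p.toMeasure.prod (stdComplexGaussian n))
    (i j : Fin N) :
    Tendsto (fun σ : ℝ =>
        ∫ q : (Fin J) × (Fin n → ℂ),
          (xhat q.1 (y q.1 + σ • (S q.1).mulVec q.2) i -
              ∫ q', xhat q'.1 (y q'.1 + σ • (S q'.1).mulVec q'.2) i ∂ν) *
            star (xhat q.1 (y q.1 + σ • (S q.1).mulVec q.2) j -
              ∫ q', xhat q'.1 (y q'.1 + σ • (S q'.1).mulVec q'.2) j ∂ν) ∂ν)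
      (nhdsWithin 0 (Set.Ioi 0))
      (nhds (∫ q, (xhat q (y q) i - ∫ q', xhat q' (y q') i ∂p.toMeasure) *
          star (xhat q (y q) j - ∫ q', xhat q' (y q') j ∂p.toMeasure)
          ∂p.toMeasure)) := by
  subst hν
  set μ := p.toMeasure.prod (stdComplexGaussian n)
  have hP : ∀ᵐ q ∂p.toMeasure, p q ≠ 0 :=
    ae_iff_of_countable.2 fun q hq => by rwa [PMF.toMeasure_apply_singleton _ _ (by simp)] at hq
  have hμ : ∀ᵐ qz ∂μ, p qz.1 ≠ 0 := Measure.quasiMeasurePreserving_fst.ae hP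
  have hbound (q : Fin J) : ∃ K : ℝ, ∃ k : ℕ, p q ≠ 0 → ∀ σ : ℝ, |σ| ≤ 1 → ∀ z,
      ‖xhat q (y q + σ • (S q).mulVec z)‖ ≤ K * (1 + ‖z‖) ^ k := by
    by_cases hq : p q = 0
    · exact ⟨0, 0, fun h => absurd hq h⟩
    obtain ⟨C, r, α, hC, -, hα, h⟩ := hgrowth q hq
    obtain ⟨K, k, hK⟩ :=
      exists_norm_comp_add_smul_mulVec_le (hcont q hq) hC.le hα.le h (y q) (S q)
    exact ⟨K, k, fun _ => hK⟩
  choose K k hK using hbound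
  have hσ : ∀ᶠ σ in 𝓝[>] (0 : ℝ), |σ| ≤ 1 := by
    filter_upwards [Ioc_mem_nhdsGT one_pos] with σ hσ
    exact abs_le.2 ⟨by linarith [hσ.1], hσ.2⟩
  have hmeas (i : Fin N) (σ : ℝ) : AEStronglyMeasurable
      (fun qz : Fin J × (Fin n → ℂ) => xhat qz.1 (y qz.1 + σ • (S qz.1).mulVec qz.2) i) μ := by
    refine (aemeasurable_from_prod_countable_right (hP.mono fun q hq => ?_)).aestronglyMeasurable
    have hnoise : Continuous fun z : Fin n → ℂ => y q + σ • (S q).mulVec z :=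
      continuous_const.add ((continuous_const.matrix_mulVec continuous_id).const_smul σ)
    exact ((continuous_apply i).comp ((hcont q hq).comp hnoise)).measurable
  have hle (i : Fin N) : ∀ᶠ σ in 𝓝[>] (0 : ℝ), ∀ᵐ qz ∂μ,
      ‖xhat qz.1 (y qz.1 + σ • (S qz.1).mulVec qz.2) i‖ ≤ K qz.1 * (1 + ‖qz.2‖) ^ k qz.1 := by
    filter_upwards [hσ] with σ hσ
    filter_upwards [hμ] with qz hq
    exact (norm_le_pi_norm _ i).trans (hK qz.1 hq σ hσ qz.2)
  have hlim (i : Fin N) : ∀ᵐ qz ∂μ, Tendsto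
      (fun σ : ℝ => xhat qz.1 (y qz.1 + σ • (S qz.1).mulVec qz.2) i) (𝓝[>] 0)
      (𝓝 (xhat qz.1 (y qz.1) i)) := by
    filter_upwards [hμ] with ⟨q, z⟩ hq
    exact tendsto_pi_nhds.1 (tendsto_comp_add_smul_nhdsGT (hcont q hq) (y q) _) i
  have hcov := tendsto_integral_mul_star_sub_integral
    (memLp_two_mul_one_add_norm_pow_prod_stdComplexGaussian p.toMeasure n K k)
    (.of_forall (hmeas i)) (.of_forall (hmeas j)) (hle i) (hle j) (hlim i) (hlim j)
  have hfst (φ : Fin J → ℂ) :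
      ∫ qz, φ qz.1 ∂p.toMeasure.prod (stdComplexGaussian n) = ∫ q, φ q ∂p.toMeasure := by
    simp [integral_fun_fst]
  simp only [hfst (fun q => xhat q (y q) i), hfst (fun q => xhat q (y q) j)] at hcov
  rwa [hfst (fun q => (xhat q (y q) i - ∫ q', xhat q' (y q') i ∂p.toMeasure) *
    star (xhat q (y q) j - ∫ q', xhat q' (y q') j ∂p.toMeasure))] at hcov

/-- In the zero-noise limit, the total covariance of the reconstruction over both
the (finitely distributed) random sampling set `Ω` and the Gaussian measurement
noise converges to the covariance due to the random sampling set alone: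
`lim_{σ→0⁺} Var_{Ω,z}[x̂_Ω(F_Ω x + σ S_Ω z)] = Var_Ω[x̂_Ω(F_Ω x)]`. -/
theorem stmt_17 (n N J : ℕ) (F : Matrix (Fin n) (Fin n) ℂ)
    (hF : F ∈ Matrix.unitaryGroup (Fin n) ℂ)
    (m : Fin J → ℕ)
    (g : ∀ q : Fin J, Fin (m q) → Fin n) (hg : ∀ q, Function.Injective (g q))
    (S : ∀ q : Fin J, Matrix (Fin (m q)) (Fin n) ℂ)
    (hS : ∀ q i j, S q i j = if j = g q i then 1 else 0)
    (FΩ : ∀ q : Fin J, Matrix (Fin (m q)) (Fin n) ℂ) (hFΩ : ∀ q, FΩ q = S q * F)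
    (x : Fin n → ℂ) (y : ∀ q : Fin J, Fin (m q) → ℂ) (hy : ∀ q, y q = (FΩ q).mulVec x)
    (xhat : ∀ q : Fin J, (Fin (m q) → ℂ) → Fin N → ℂ)
    (p : PMF (Fin J))
    (hcont : ∀ q, p q ≠ 0 → Continuous (xhat q))
    (D : ∀ q : Fin J, Matrix (Fin N) (Fin (m q)) ℂ)
    (hL2 : ∀ q, p q ≠ 0 → Tendsto
      (fun t : ℝ => (t ^ 2)⁻¹ *
        ∫ ω, l2norm (fun i =>
            xhat q (y q + t • ω) i - xhat q (y q) i - t • (D q).mulVec ω i) ^ 2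
          ∂(uniformSphere (m q)))
      (nhdsWithin 0 (Set.Ioi 0)) (nhds 0))
    (hgrowth : ∀ q, p q ≠ 0 → ∃ C r α : ℝ, 0 < C ∧ 0 < r ∧ 0 < α ∧
      ∀ w, r < l2norm w → l2norm (xhat q w) ≤ C * l2norm w ^ α)
    (ν : Measure ((Fin J) × (Fin n → ℂ)))
    (hν : ν = p.toMeasure.prod (stdComplexGaussian n))
    (i j : Fin N) :
    Tendsto (fun σ : ℝ =>
        ∫ q : (Fin J) × (Fin n → ℂ),
          (xhat q.1 (y q.1 + σ • (S q.1).mulVec q.2) i -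
              ∫ q', xhat q'.1 (y q'.1 + σ • (S q'.1).mulVec q'.2) i ∂ν) *
            star (xhat q.1 (y q.1 + σ • (S q.1).mulVec q.2) j -
              ∫ q', xhat q'.1 (y q'.1 + σ • (S q'.1).mulVec q'.2) j ∂ν) ∂ν)
      (nhdsWithin 0 (Set.Ioi 0))
      (nhds (∫ q, (xhat q (y q) i - ∫ q', xhat q' (y q') i ∂p.toMeasure) *
          star (xhat q (y q) j - ∫ q', xhat q' (y q') j ∂p.toMeasure)
          ∂p.toMeasure)) :=
  stmt_17_general n N J m S y xhat p hcont hgrowth ν hν i j
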